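/- (Theorem 3.3, spacelike principal normal case) A unit speed spacelike curve x : ℝ → E₁⁴ with Frenet frame {T, N, B₁, B₂}, nowhere-vanishing curvatures k₁, k₂, k₃ and signs ε₁ = +1, ε₂ ∈ {−1,1} is a B₂-slant helix if and only if there exist constants C, D ∈ ℝ such that k₃(s)/k₂(s) = C cos(∫₀ˢ k₁(t) dt) + D sin(∫₀ˢ k₁(t) dt) for all s. -/

import Mathlib

set_option maxRecDepth 4000
set_option maxHeartbeats 1000000

noncomputable def mink (v w : Fin 4 → ℝ) : ℝ :=
  -(v 0 * w 0) + v 1 * w 1 + v 2 * w 2 + v 3 * w 3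

lemma mink_smul (a : ℝ) (v w : Fin 4 → ℝ) : mink (a • v) w = a * mink v w := by
  simp [mink]; ring

lemma mink_add (u v w : Fin 4 → ℝ) : mink (u + v) w = mink u w + mink v w := by
  simp [mink]; ring

lemma mink_comm (v w : Fin 4 → ℝ) : mink v w = mink w v := by
  simp [mink]; ring

lemma hasDerivAt_mink {V : ℝ → Fin 4 → ℝ} (hV : Differentiable ℝ V) (U : Fin 4 → ℝ) (s : ℝ) :
    HasDerivAt (fun t => mink (V t) U) (mink (deriv V s) U) s := by
  have h' := hasDerivAt_pi.1 (hV s).hasDerivAt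
  have : HasDerivAt (fun t => -(V t 0 * U 0) + V t 1 * U 1 + V t 2 * U 2 + V t 3 * U 3)
      (-(deriv V s 0 * U 0) + deriv V s 1 * U 1 + deriv V s 2 * U 2 + deriv V s 3 * U 3) s :=
    ((((h' 0).mul_const _).neg.add ((h' 1).mul_const _)).add ((h' 2).mul_const _)).add
      ((h' 3).mul_const _)
  simpa [mink] using this

lemma const_of_hasDerivAt_zero {E : Type*} [NormedAddCommGroup E] [NormedSpace ℝ E]
    {f : ℝ → E} (h : ∀ s, HasDerivAt f 0 s) : ∀ s, f s = f 0 := fun s =>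
  is_const_of_deriv_eq_zero (fun t => (h t).differentiableAt) (fun t => (h t).deriv) s 0

open Matrix in
lemma mink_nondeg (v : Fin 4 → Fin 4 → ℝ) (d : Fin 4 → ℝ) (hd : ∀ i, d i ≠ 0)
    (hg : ∀ i j, mink (v i) (v j) = if i = j then d i else 0)
    (U : Fin 4 → ℝ) (hU : ∀ i, mink (v i) U = 0) : U = 0 := by
  set η : Matrix (Fin 4) (Fin 4) ℝ := Matrix.diagonal ![-1, 1, 1, 1] with hη
  have gram : Matrix.of v * η * (Matrix.of v)ᵀ = Matrix.diagonal d := by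
    ext i j
    have h := hg i j
    simp only [mink] at h
    fin_cases i <;> fin_cases j <;>
      simp_all [Matrix.mul_apply, Matrix.transpose_apply, Fin.sum_univ_four, hη,
        Matrix.diagonal, Matrix.of_apply]
  have hdetd : (Matrix.diagonal d).det ≠ 0 := by
    simp [Matrix.det_diagonal, Finset.prod_eq_zero_iff]
    intro i; exact hd i
  have hdetM : IsUnit (Matrix.of v).det := by
    rw [isUnit_iff_ne_zero]
    intro h
    apply hdetd
    rw [← gram]
    simp [Matrix.det_mul, h]
  have hw : (Matrix.of v).mulVec (η.mulVec U) = 0 := by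
    ext i
    have h := hU i
    simp only [mink] at h
    fin_cases i <;>
      simp_all [Matrix.mulVec, dotProduct, Fin.sum_univ_four, hη,
        Matrix.diagonal, Matrix.of_apply]
  have h2 : η.mulVec U = 0 := by
    have := congrArg ((Matrix.of v)⁻¹.mulVec) hw
    rwa [Matrix.mulVec_mulVec, Matrix.nonsing_inv_mul _ hdetM, Matrix.one_mulVec,
      Matrix.mulVec_zero] at this
  ext i
  have h3 := congrFun h2 i
  fin_cases i <;>
    simp_all [Matrix.mulVec, dotProduct, Fin.sum_univ_four, hη, Matrix.diagonal] <;> linarith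

/-- A unit speed spacelike curve in Minkowski 4-space `E₁⁴` together with a Frenet
frame `{T, N, B₁, B₂}`, nowhere-vanishing curvatures `k₁, k₂, k₃` and signs `ε₁, ε₂`. -/
structure SpacelikeFrenetCurve where
  x : ℝ → Fin 4 → ℝ
  T : ℝ → Fin 4 → ℝ
  N : ℝ → Fin 4 → ℝ
  B₁ : ℝ → Fin 4 → ℝ
  B₂ : ℝ → Fin 4 → ℝ
  k₁ : ℝ → ℝ
  k₂ : ℝ → ℝ
  k₃ : ℝ → ℝ
  ε₁ : ℝ
  ε₂ : ℝ
  smooth_x : ContDiff ℝ (⊤ : ℕ∞) x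
  smooth_T : ContDiff ℝ (⊤ : ℕ∞) T
  smooth_N : ContDiff ℝ (⊤ : ℕ∞) N
  smooth_B₁ : ContDiff ℝ (⊤ : ℕ∞) B₁
  smooth_B₂ : ContDiff ℝ (⊤ : ℕ∞) B₂
  smooth_k₁ : ContDiff ℝ (⊤ : ℕ∞) k₁
  smooth_k₂ : ContDiff ℝ (⊤ : ℕ∞) k₂
  smooth_k₃ : ContDiff ℝ (⊤ : ℕ∞) k₃
  k₁_ne : ∀ s, k₁ s ≠ 0
  k₂_ne : ∀ s, k₂ s ≠ 0
  k₃_ne : ∀ s, k₃ s ≠ 0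
  ε₁_sign : ε₁ = 1 ∨ ε₁ = -1
  ε₂_sign : ε₂ = 1 ∨ ε₂ = -1
  tangent : ∀ s, deriv x s = T s
  TT : ∀ s, mink (T s) (T s) = 1
  NN : ∀ s, mink (N s) (N s) = ε₁
  B₁B₁ : ∀ s, mink (B₁ s) (B₁ s) = -(ε₁ * ε₂)
  B₂B₂ : ∀ s, mink (B₂ s) (B₂ s) = ε₂
  TN : ∀ s, mink (T s) (N s) = 0
  TB₁ : ∀ s, mink (T s) (B₁ s) = 0
  TB₂ : ∀ s, mink (T s) (B₂ s) = 0
  NB₁ : ∀ s, mink (N s) (B₁ s) = 0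
  NB₂ : ∀ s, mink (N s) (B₂ s) = 0
  B₁B₂ : ∀ s, mink (B₁ s) (B₂ s) = 0
  frenet_T : ∀ s, deriv T s = k₁ s • N s
  frenet_N : ∀ s, deriv N s = (-(ε₁ * k₁ s)) • T s + k₂ s • B₁ s
  frenet_B₁ : ∀ s, deriv B₁ s = (ε₂ * k₂ s) • N s + k₃ s • B₂ s
  frenet_B₂ : ∀ s, deriv B₂ s = (ε₁ * k₃ s) • B₁ s

/-- `x` is a `B₂`-slant helix: a nonzero constant vector `U` makes a constant
"angle" with the second binormal, i.e. `s ↦ ⟪B₂ s, U⟫` is constant. -/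
def IsB₂SlantHelix (c : SpacelikeFrenetCurve) : Prop :=
  ∃ U : Fin 4 → ℝ, U ≠ 0 ∧ ∃ C : ℝ, ∀ s : ℝ, mink (c.B₂ s) U = C

/-- Theorem 3.3 (spacelike principal normal, `ε₁ = +1`): `x` is a `B₂`-slant helix iff
`k₃/k₂ = C cos(∫₀ˢ k₁) + D sin(∫₀ˢ k₁)` for some constants `C, D`. -/
theorem stmt17 (c : SpacelikeFrenetCurve) (hε : c.ε₁ = 1) :
    IsB₂SlantHelix c ↔
    ∃ C D : ℝ, ∀ s : ℝ, c.k₃ s / c.k₂ s =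
      C * Real.cos (∫ t in (0:ℝ)..s, c.k₁ t) +
      D * Real.sin (∫ t in (0:ℝ)..s, c.k₁ t) := by
  have hdT : Differentiable ℝ c.T := c.smooth_T.differentiable (by simp)
  have hdN : Differentiable ℝ c.N := c.smooth_N.differentiable (by simp)
  have hdB₁ : Differentiable ℝ c.B₁ := c.smooth_B₁.differentiable (by simp)
  have hdB₂ : Differentiable ℝ c.B₂ := c.smooth_B₂.differentiable (by simp)
  set θ : ℝ → ℝ := fun s => ∫ t in (0:ℝ)..s, c.k₁ t with hθdef
  have hθd : ∀ s, HasDerivAt θ (c.k₁ s) s := fun s =>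
    (c.smooth_k₁.continuous.integral_hasStrictDerivAt 0 s).hasDerivAt
  have hε₂ne : c.ε₂ ≠ 0 := by
    rcases c.ε₂_sign with h | h <;> rw [h] <;> norm_num
  have hε₂sq : c.ε₂ * c.ε₂ = 1 := by
    rcases c.ε₂_sign with h | h <;> rw [h] <;> norm_num
  constructor
  · rintro ⟨U, hU0, C0, hC0⟩
    -- derivative of ⟪B₂,U⟫
    have hB2 : ∀ s, HasDerivAt (fun t => mink (c.B₂ t) U) (c.k₃ s * mink (c.B₁ s) U) s := by
      intro s
      have h := hasDerivAt_mink hdB₂ U s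
      rw [c.frenet_B₂ s] at h
      simpa [mink_smul, hε] using h
    have hB1zero : ∀ s, mink (c.B₁ s) U = 0 := by
      intro s
      have hconst : HasDerivAt (fun t => mink (c.B₂ t) U) 0 s := by
        have he : (fun t => mink (c.B₂ t) U) = fun _ => C0 := funext hC0
        rw [he]; exact hasDerivAt_const s C0
      have h := (hB2 s).unique hconst
      rcases mul_eq_zero.1 h with h' | h'
      · exact absurd h' (c.k₃_ne s)
      · exact h'
    -- ⟪B₁,U⟫' = 0 gives the key relation
    have hkey : ∀ s, c.ε₂ * c.k₂ s * mink (c.N s) U + c.k₃ s * C0 = 0 := by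
      intro s
      have h := hasDerivAt_mink hdB₁ U s
      rw [c.frenet_B₁ s] at h
      rw [mink_add, mink_smul, mink_smul] at h
      have hconst : HasDerivAt (fun t => mink (c.B₁ t) U) 0 s := by
        have he : (fun t => mink (c.B₁ t) U) = fun _ => (0:ℝ) := funext hB1zero
        rw [he]; exact hasDerivAt_const s 0
      have h2 := h.unique hconst
      rw [hC0 s] at h2
      linarith [h2]
    -- ODE for uT, uN
    have hN : ∀ s, HasDerivAt (fun t => mink (c.N t) U) (-(c.k₁ s) * mink (c.T s) U) s := by
      intro s
      have h := hasDerivAt_mink hdN U s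
      rw [c.frenet_N s, mink_add, mink_smul, mink_smul, hB1zero s] at h
      simpa [hε] using h
    have hT : ∀ s, HasDerivAt (fun t => mink (c.T t) U) (c.k₁ s * mink (c.N s) U) s := by
      intro s
      have h := hasDerivAt_mink hdT U s
      rw [c.frenet_T s, mink_smul] at h
      exact h
    -- F and G are constant
    have hF : ∀ s, HasDerivAt
        (fun t => mink (c.N t) U * Real.cos (θ t) + mink (c.T t) U * Real.sin (θ t)) 0 s := by
      intro s
      have h := (((hN s).mul (hθd s).cos)).add (((hT s).mul (hθd s).sin))
      refine h.congr_deriv ?_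
      ring
    have hG : ∀ s, HasDerivAt
        (fun t => -(mink (c.N t) U) * Real.sin (θ t) + mink (c.T t) U * Real.cos (θ t)) 0 s := by
      intro s
      have h := (((hN s).neg.mul (hθd s).sin)).add (((hT s).mul (hθd s).cos))
      refine h.congr_deriv ?_
      simp only [Pi.neg_apply]
      ring
    have hFc := const_of_hasDerivAt_zero hF
    have hGc := const_of_hasDerivAt_zero hG
    set A : ℝ := mink (c.N 0) U * Real.cos (θ 0) + mink (c.T 0) U * Real.sin (θ 0) with hA
    set B : ℝ := -(mink (c.N 0) U) * Real.sin (θ 0) + mink (c.T 0) U * Real.cos (θ 0) with hB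
    have huN : ∀ s, mink (c.N s) U = A * Real.cos (θ s) - B * Real.sin (θ s) := by
      intro s
      have h1 := hFc s
      have h2 := hGc s
      have hsc := Real.sin_sq_add_cos_sq (θ s)
      linear_combination Real.cos (θ s) * h1 - Real.sin (θ s) * h2 - mink (c.N s) U * hsc
    -- C0 ≠ 0
    have hC0ne : C0 ≠ 0 := by
      intro hc
      have huNz : ∀ s, mink (c.N s) U = 0 := by
        intro s
        have h := hkey s
        rw [hc] at h
        have : c.ε₂ * c.k₂ s * mink (c.N s) U = 0 := by linarith
        rcases mul_eq_zero.1 this with h' | h'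
        · rcases mul_eq_zero.1 h' with h'' | h''
          · exact absurd h'' hε₂ne
          · exact absurd h'' (c.k₂_ne s)
        · exact h'
      have huTz : ∀ s, mink (c.T s) U = 0 := by
        intro s
        have hconst : HasDerivAt (fun t => mink (c.N t) U) 0 s := by
          have he : (fun t => mink (c.N t) U) = fun _ => (0:ℝ) := funext huNz
          rw [he]; exact hasDerivAt_const s 0
        have h := (hN s).unique hconst
        rcases mul_eq_zero.1 h with h' | h'
        · exact absurd (neg_eq_zero.1 h') (c.k₁_ne s)
        · exact h'
      apply hU0
      apply mink_nondeg ![c.T 0, c.N 0, c.B₁ 0, c.B₂ 0] ![1, 1, -c.ε₂, c.ε₂]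
      · intro i
        fin_cases i <;> simp [hε₂ne] <;> simp [neg_ne_zero, hε₂ne]
      · intro i j
        fin_cases i <;> fin_cases j <;>
          simp [c.TT 0, c.NN 0, c.B₁B₁ 0, c.B₂B₂ 0, c.TN 0, c.TB₁ 0, c.TB₂ 0,
            c.NB₁ 0, c.NB₂ 0, c.B₁B₂ 0, hε, mink_comm (c.N 0) (c.T 0),
            mink_comm (c.B₁ 0) (c.T 0), mink_comm (c.B₂ 0) (c.T 0),
            mink_comm (c.B₁ 0) (c.N 0), mink_comm (c.B₂ 0) (c.N 0),
            mink_comm (c.B₂ 0) (c.B₁ 0)]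
      · intro i
        fin_cases i <;>
          simp [huTz 0, huNz 0, hB1zero 0, hc ▸ hC0 0]
    -- conclude
    refine ⟨-(c.ε₂ * A) / C0, c.ε₂ * B / C0, fun s => ?_⟩
    have h1 := hkey s
    rw [huN s] at h1
    have h2 : c.k₃ s * C0 = (-(c.ε₂ * A) * Real.cos (θ s) + c.ε₂ * B * Real.sin (θ s)) * c.k₂ s := by
      linear_combination h1
    rw [div_eq_iff (c.k₂_ne s)]
    field_simp
    linear_combination h2
  · rintro ⟨C, D, hCD⟩
    set a : ℝ → ℝ := fun s => -C * Real.sin (θ s) + D * Real.cos (θ s) with hadef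
    set b : ℝ → ℝ := fun s => -(C * Real.cos (θ s) + D * Real.sin (θ s)) with hbdef
    set U : ℝ → Fin 4 → ℝ := fun s => a s • c.T s + b s • c.N s + c.B₂ s with hUdef
    have ha : ∀ s, HasDerivAt a (c.k₁ s * b s) s := by
      intro s
      have h := (((hθd s).sin.const_mul (-C))).add (((hθd s).cos.const_mul D))
      refine h.congr_deriv ?_
      simp [hbdef]
      ring
    have hb : ∀ s, HasDerivAt b (-(c.k₁ s) * a s) s := by
      intro s
      have h := ((((hθd s).cos.const_mul C)).add (((hθd s).sin.const_mul D))).neg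
      refine h.congr_deriv ?_
      simp [hadef]
      ring
    have hUd : ∀ s, HasDerivAt U 0 s := by
      intro s
      have hk3 : c.k₃ s = (C * Real.cos (θ s) + D * Real.sin (θ s)) * c.k₂ s := by
        have h : c.k₃ s / c.k₂ s = C * Real.cos (θ s) + D * Real.sin (θ s) := hCD s
        rw [div_eq_iff (c.k₂_ne s)] at h
        linarith [h]
      have h := ((((ha s).smul (hdT s).hasDerivAt).add ((hb s).smul (hdN s).hasDerivAt)).add
        (hdB₂ s).hasDerivAt)
      rw [c.frenet_T s, c.frenet_N s, c.frenet_B₂ s] at h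
      refine h.congr_deriv ?_
      funext i
      simp [hε, hbdef, hk3]
      ring
    have hUc := const_of_hasDerivAt_zero hUd
    have expand : ∀ s, mink (c.B₂ s) (a s • c.T s + b s • c.N s + c.B₂ s) = c.ε₂ := by
      intro s
      rw [mink_comm, mink_add, mink_add, mink_smul, mink_smul,
        c.TB₂ s, c.NB₂ s, c.B₂B₂ s]
      ring
    have key : ∀ s, mink (c.B₂ s) (U 0) = c.ε₂ := by
      intro s
      rw [← hUc s]
      exact expand s
    refine ⟨U 0, ?_, c.ε₂, key⟩
    intro h
    have hk := key 0
    rw [h] at hk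
    simp [mink] at hk
    exact hε₂ne hk.symm
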